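/- arXiv:2402.12235 — 2 statements merged into one kernel-verified Lean document; each statement's English description precedes it below -/
import Mathlib

section
/- Unconditional LPP–utility trade-off: suppose Y − X − Z is a Markov chain of finite random variables with |𝕏| > 1 and P_{Y|X} strictly positive. If for every random variable S with S − X − Z and S ≠ Y (as random variables) the inference gain I_∞(S;Z) = log(Pr[S = Ŝ(Z)]/Pr[S = Ŝ]) is at most γ, then I(Y;Z) ≤ γ. -/
open scoped BigOperators
noncomputable section

/-- A joint pmf on a triple of finite alphabets (indexed x, y, z). -/
def IsJointPMF3 {X Y Z : Type} [Fintype X] [Fintype Y] [Fintype Z] (r : X → Y → Z → ℝ) : Prop :=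
  (∀ x y z, 0 ≤ r x y z) ∧ ∑ x, ∑ y, ∑ z, r x y z = 1

/-- A joint pmf on a quadruple of finite alphabets. -/
def IsJointPMF4 {S X Y Z : Type} [Fintype S] [Fintype X] [Fintype Y] [Fintype Z]
    (t : S → X → Y → Z → ℝ) : Prop :=
  (∀ s x y z, 0 ≤ t s x y z) ∧ ∑ s, ∑ x, ∑ y, ∑ z, t s x y z = 1

/-- Markov chain Y − X − Z: Y and Z are conditionally independent given X. -/
def MarkovYXZ {X Y Z : Type} [Fintype Y] [Fintype Z] (r : X → Y → Z → ℝ) : Prop :=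
  ∀ x y z, r x y z * (∑ yq, ∑ zq, r x yq zq) = (∑ zq, r x y zq) * (∑ yq, r x yq z)

/-- Markov chain S − X − Z: S and Z are conditionally independent given X. -/
def MarkovSXZ {S X Z : Type} [Fintype S] [Fintype Z] (q : S → X → Z → ℝ) : Prop :=
  ∀ s x z, q s x z * (∑ sq, ∑ zq, q sq x zq) = (∑ zq, q s x zq) * (∑ sq, q sq x z)

/-- Pr[S = Ŝ(Z)]: probability of the Bayes-optimal guess of S from Z. -/
def bayesGuessProb {S Z : Type} [Fintype S] [Fintype Z] (q : S → Z → ℝ) : ℝ :=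
  ⨆ g : Z → S, ∑ z, q (g z) z

/-- Pr[S = Ŝ]: probability of the Bayes-optimal constant guess of S. -/
def baselineProb {S Z : Type} [Fintype S] [Fintype Z] (q : S → Z → ℝ) : ℝ :=
  ⨆ s : S, ∑ z, q s z

/-- The inference gain I_∞(S; Z) = log₂(Pr[S = Ŝ(Z)] / Pr[S = Ŝ]). -/
def infGain {S Z : Type} [Fintype S] [Fintype Z] (q : S → Z → ℝ) : ℝ :=
  Real.logb 2 (bayesGuessProb q / baselineProb q)

/-- S equals Y as a random variable: some bijection between the alphabets
identifies them almost surely. -/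
def EqAsRandomVars {S X Y Z : Type} [Fintype S] [Fintype X] [Fintype Y] [Fintype Z]
    [DecidableEq Y] (t : S → X → Y → Z → ℝ) : Prop :=
  ∃ φ : S ≃ Y, ∑ s, ∑ x, ∑ y, ∑ z, (if φ s = y then t s x y z else 0) = 1

/-- Shannon mutual information I(Y;Z) in bits. -/
def mutInfo {Y Z : Type} [Fintype Y] [Fintype Z] (p : Y → Z → ℝ) : ℝ :=
  ∑ y, ∑ z, p y z * Real.logb 2 (p y z / ((∑ z', p y z') * (∑ y', p y' z)))

/-- marginal of (Y,Z) -/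
def margYZ {X Y Z : Type} [Fintype X] (r : X → Y → Z → ℝ) : Y → Z → ℝ :=
  fun y z => ∑ x, r x y z

/-- `T = ∑_z max_y P(z|y)` -/
def TT {X Y Z : Type} [Fintype X] [Fintype Y] [Fintype Z] (r : X → Y → Z → ℝ) : ℝ :=
  ∑ z, ⨆ y, margYZ r y z / ∑ z', margYZ r y z'

lemma bayesGuessProb_eq {S Z : Type} [Fintype S] [Fintype Z] [Nonempty S] (q : S → Z → ℝ) :
    bayesGuessProb q = ∑ z, ⨆ s, q s z := by
  have hbdd : ∀ z : Z, BddAbove (Set.range fun s => q s z) := fun z => Finite.bddAbove_range _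
  apply le_antisymm
  · exact ciSup_le fun g => Finset.sum_le_sum fun z _ => le_ciSup (hbdd z) (g z)
  · have hmax : ∀ z : Z, ∃ s0 : S, ∀ s, q s z ≤ q s0 z := fun z => Finite.exists_max _
    choose g hg using hmax
    calc ∑ z, ⨆ s, q s z ≤ ∑ z, q (g z) z :=
          Finset.sum_le_sum fun z _ => ciSup_le (hg z)
      _ ≤ bayesGuessProb q :=
          le_ciSup (Finite.bddAbove_range fun g : Z → S => ∑ z, q (g z) z) g

lemma iSup_sigma_fin {Y : Type} [Fintype Y] [Nonempty Y] {N : Y → ℕ} (hN : ∀ y, 0 < N y)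
    (f : Y → ℝ) :
    (⨆ s : Σ y : Y, Fin (N y), f s.1) = ⨆ y, f y := by
  haveI : Nonempty (Σ y : Y, Fin (N y)) := ⟨⟨Classical.arbitrary Y, ⟨0, hN _⟩⟩⟩
  apply le_antisymm
  · exact ciSup_le fun s => le_ciSup (Finite.bddAbove_range f) s.1
  · exact ciSup_le fun y =>
      le_ciSup_of_le (Finite.bddAbove_range _) (⟨y, ⟨0, hN y⟩⟩ : Σ y : Y, Fin (N y)) le_rfl

lemma marg_le_m {Y Z : Type} [Fintype Y] [Fintype Z] [Nonempty Y]
    (p : Y → Z → ℝ) (hp : ∀ y z, 0 ≤ p y z)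
    (hPy : ∀ y, 0 < ∑ z', p y z') (hsumY : ∑ y, ∑ z, p y z = 1) (z : Z) :
    ∑ y', p y' z ≤ ⨆ y, p y z / ∑ z', p y z' := by
  have hle : ∀ y : Y, p y z ≤ (∑ z', p y z') * ⨆ y', p y' z / ∑ z', p y' z' := by
    intro y
    have h1 : p y z / (∑ z', p y z') ≤ ⨆ y', p y' z / ∑ z', p y' z' :=
      le_ciSup (f := fun y' => p y' z / ∑ z', p y' z') (Finite.bddAbove_range _) y
    calc p y z = (∑ z', p y z') * (p y z / (∑ z', p y z')) := by
          rw [mul_comm, div_mul_cancel₀ _ (hPy y).ne']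
      _ ≤ _ := mul_le_mul_of_nonneg_left h1 (hPy y).le
  calc ∑ y', p y' z ≤ ∑ y', (∑ z', p y' z') * ⨆ y'', p y'' z / ∑ z', p y'' z' :=
        Finset.sum_le_sum fun y _ => hle y
    _ = (∑ y', ∑ z', p y' z') * ⨆ y'', p y'' z / ∑ z', p y'' z' := by
        rw [← Finset.sum_mul]
    _ = _ := by rw [hsumY, one_mul]

lemma T_ge_one {Y Z : Type} [Fintype Y] [Fintype Z] [Nonempty Y]
    (p : Y → Z → ℝ) (hp : ∀ y z, 0 ≤ p y z)
    (hPy : ∀ y, 0 < ∑ z', p y z') (hsumY : ∑ y, ∑ z, p y z = 1) :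
    1 ≤ ∑ z, ⨆ y, p y z / ∑ z', p y z' := by
  have h1 : (1 : ℝ) = ∑ z, ∑ y', p y' z := by rw [Finset.sum_comm]; exact hsumY.symm
  rw [h1]
  exact Finset.sum_le_sum fun z _ => marg_le_m p hp hPy hsumY z

lemma step2 {X Y Z : Type} [Fintype X] [Fintype Y] [Fintype Z]
    [Nonempty X] [Nonempty Y] [Nonempty Z] [DecidableEq Y]
    (r : X → Y → Z → ℝ) (hr : IsJointPMF3 r) (hmc : MarkovYXZ r)
    (hcardY : 1 < Fintype.card Y)
    (hPy : ∀ y, 0 < ∑ z', margYZ r y z')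
    (γ : ℝ)
    (h : ∀ (S : Type) [Fintype S] [Nonempty S] (t : S → X → Y → Z → ℝ),
        IsJointPMF4 t → (∀ x y z, ∑ s, t s x y z = r x y z) →
        MarkovSXZ (fun s x z => ∑ y, t s x y z) →
        ¬ EqAsRandomVars t →
        infGain (fun s z => ∑ x, ∑ y, t s x y z) ≤ γ)
    (c : ℝ) (hc0 : 0 < c) (hcmin : ∀ y, c ≤ ∑ z', margYZ r y z')
    (n : ℕ) :
    Real.logb 2 (TT r * ((c * ((n : ℝ) + 1)) / (c * ((n : ℝ) + 1) + 2))) ≤ γ := by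
  classical
  have hp0 : ∀ y z, 0 ≤ margYZ r y z := fun y z => Finset.sum_nonneg fun x _ => hr.1 x y z
  have hsumY : ∑ y, ∑ z, margYZ r y z = 1 := by
    rw [← hr.2]
    calc ∑ y, ∑ z, ∑ x, r x y z = ∑ y, ∑ x, ∑ z, r x y z :=
          Finset.sum_congr rfl fun y _ => Finset.sum_comm
      _ = ∑ x, ∑ y, ∑ z, r x y z := Finset.sum_comm
  set en : ℝ := (n : ℝ) + 1 with hen
  have hen0 : (0 : ℝ) < en := by positivity
  set N : Y → ℕ := fun y => ⌈en * ∑ z', margYZ r y z'⌉₊ + 1 with hNdef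
  have hN0 : ∀ y, 0 < N y := fun y => Nat.succ_pos _
  have hN2 : ∀ y, 2 ≤ N y := by
    intro y
    have : 1 ≤ ⌈en * ∑ z', margYZ r y z'⌉₊ :=
      Nat.one_le_ceil_iff.mpr (mul_pos hen0 (hPy y))
    simp only [hNdef]
    omega
  have hNlb : ∀ y, en * (∑ z', margYZ r y z') + 1 ≤ (N y : ℝ) := by
    intro y
    have := Nat.le_ceil (en * ∑ z', margYZ r y z')
    simp only [hNdef]
    push_cast
    linarith
  have hNub : ∀ y, (N y : ℝ) ≤ en * (∑ z', margYZ r y z') + 2 := by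
    intro y
    have := Nat.ceil_lt_add_one
      (le_of_lt (mul_pos hen0 (hPy y)))
    simp only [hNdef]
    push_cast
    linarith
  have hNpos : ∀ y, (0 : ℝ) < (N y : ℝ) := fun y => by exact_mod_cast hN0 y
  set S := Σ y : Y, Fin (N y) with hS
  haveI : Nonempty S := ⟨⟨Classical.arbitrary Y, ⟨0, hN0 _⟩⟩⟩
  set t : S → X → Y → Z → ℝ :=
    fun s x y z => if s.1 = y then r x y z / (N s.1 : ℝ) else 0 with htdef
  have hfin : ∀ (y : Y) (a : ℝ), ∑ _i : Fin (N y), a / (N y : ℝ) = a := by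
    intro y a
    rw [Finset.sum_const, Finset.card_univ, Fintype.card_fin, nsmul_eq_mul,
      mul_div_cancel₀ _ (hNpos y).ne']
  have ht_y : ∀ (s : S) (x : X) (z : Z), ∑ y, t s x y z = r x s.1 z / (N s.1 : ℝ) := by
    intro s x z
    simp [htdef, Finset.sum_ite_eq]
  -- marginal over S
  have hmarg : ∀ x y z, ∑ s, t s x y z = r x y z := by
    intro x y z
    rw [← Finset.univ_sigma_univ, Finset.sum_sigma]
    have hinner : ∀ y' : Y, ∑ _i : Fin (N y'), t ⟨y', _i⟩ x y z
        = if y' = y then r x y z else 0 := by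
      intro y'
      by_cases hyy : y' = y
      · subst hyy; simp only [htdef, if_pos rfl]; exact hfin y' _
      · simp [htdef, hyy]
    rw [Finset.sum_congr rfl fun y' _ => hinner y', Finset.sum_ite_eq']
    simp
  -- pmf4
  have hpmf4 : IsJointPMF4 t := by
    constructor
    · intro s x y z
      simp only [htdef]
      split
      · exact div_nonneg (hr.1 _ _ _) (hNpos s.1).le
      · exact le_rfl
    · calc ∑ s, ∑ x, ∑ y, ∑ z, t s x y z
          = ∑ s : S, ∑ x, ∑ z, ∑ y, t s x y z := by
            refine Finset.sum_congr rfl fun s _ => Finset.sum_congr rfl fun x _ => ?_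
            exact Finset.sum_comm
        _ = ∑ s : S, ∑ x, ∑ z, r x s.1 z / (N s.1 : ℝ) := by
            refine Finset.sum_congr rfl fun s _ => Finset.sum_congr rfl fun x _ =>
              Finset.sum_congr rfl fun z _ => ?_
            exact ht_y s x z
        _ = ∑ s : S, (∑ x, ∑ z, r x s.1 z) / (N s.1 : ℝ) := by
            refine Finset.sum_congr rfl fun s _ => ?_
            rw [Finset.sum_div]
            exact Finset.sum_congr rfl fun x _ => (Finset.sum_div _ _ _).symm
        _ = ∑ y, ∑ _i : Fin (N y), (∑ x, ∑ z, r x y z) / (N y : ℝ) := by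
            rw [← Finset.univ_sigma_univ, Finset.sum_sigma]
        _ = ∑ y, ∑ x, ∑ z, r x y z := Finset.sum_congr rfl fun y _ => hfin y _
        _ = 1 := by rw [← hr.2]; exact Finset.sum_comm
  -- Markov S - X - Z
  have hmark : MarkovSXZ (fun s x z => ∑ y, t s x y z) := by
    intro s x z
    simp only [ht_y]
    have hA : ∑ sq : S, ∑ zq, r x sq.1 zq / (N sq.1 : ℝ) = ∑ y, ∑ zq, r x y zq := by
      rw [← Finset.univ_sigma_univ, Finset.sum_sigma]
      refine Finset.sum_congr rfl fun y _ => ?_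
      have : ∀ _i : Fin (N y), ∑ zq, r x y zq / (N y : ℝ) = (∑ zq, r x y zq) / (N y : ℝ) :=
        fun _ => (Finset.sum_div _ _ _).symm
      rw [Finset.sum_congr rfl fun i _ => this i]
      exact hfin y _
    have hB : ∑ sq : S, r x sq.1 z / (N sq.1 : ℝ) = ∑ y, r x y z := by
      rw [← Finset.univ_sigma_univ, Finset.sum_sigma]
      exact Finset.sum_congr rfl fun y _ => hfin y (r x y z)
    rw [hA, hB, ← Finset.sum_div, div_mul_eq_mul_div, div_mul_eq_mul_div, hmc x s.1 z]
  -- not equal to Y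
  have hneq : ¬ EqAsRandomVars t := by
    rintro ⟨φ, -⟩
    have hcard := Fintype.card_congr φ
    rw [Fintype.card_sigma] at hcard
    simp only [Fintype.card_fin] at hcard
    have h2 : Fintype.card Y * 2 ≤ ∑ y, N y := by
      calc Fintype.card Y * 2 = ∑ _y : Y, 2 := by
            rw [Finset.sum_const, Finset.card_univ, smul_eq_mul, mul_comm]
        _ ≤ ∑ y, N y := Finset.sum_le_sum fun y _ => hN2 y
    omega
  -- the induced distribution of (S, Z)
  set q' : S → Z → ℝ := fun s z => margYZ r s.1 z / (N s.1 : ℝ) with hq'def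
  have hq'eq : (fun s z => ∑ x, ∑ y, t s x y z) = q' := by
    funext s z
    simp only [hq'def, margYZ]
    rw [Finset.sum_congr rfl fun x _ => ht_y s x z, ← Finset.sum_div]
  have hGuess : bayesGuessProb q' = ∑ z, ⨆ y, margYZ r y z / (N y : ℝ) := by
    rw [bayesGuessProb_eq]
    exact Finset.sum_congr rfl fun z _ => iSup_sigma_fin hN0 (fun y => margYZ r y z / (N y : ℝ))
  have hBase : baselineProb q' = ⨆ y, (∑ z', margYZ r y z') / (N y : ℝ) := by
    have hsz : ∀ s : S, ∑ z, q' s z = (∑ z', margYZ r s.1 z') / (N s.1 : ℝ) := by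
      intro s
      simp only [hq'def]
      exact (Finset.sum_div _ _ _).symm
    unfold baselineProb
    rw [show (fun s : S => ∑ z, q' s z)
        = fun s : S => (∑ z', margYZ r s.1 z') / (N s.1 : ℝ) from funext hsz]
    exact iSup_sigma_fin hN0 (fun y => (∑ z', margYZ r y z') / (N y : ℝ))
  have hB_pos : 0 < baselineProb q' := by
    rw [hBase]
    obtain ⟨y0⟩ := ‹Nonempty Y›
    exact lt_of_lt_of_le (div_pos (hPy y0) (hNpos y0))
      (le_ciSup (f := fun y => (∑ z', margYZ r y z') / (N y : ℝ))
        (Finite.bddAbove_range _) y0)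
  have hPyle1 : ∀ y, (∑ z', margYZ r y z') ≤ 1 := by
    intro y
    rw [← hsumY]
    exact Finset.single_le_sum (f := fun y => ∑ z, margYZ r y z)
      (fun y' _ => Finset.sum_nonneg fun z _ => hp0 y' z) (Finset.mem_univ y)
  have hB_le : baselineProb q' ≤ 1 / en := by
    rw [hBase]
    refine ciSup_le fun y => ?_
    rw [div_le_div_iff₀ (hNpos y) hen0, one_mul]
    nlinarith [hNlb y, hPyle1 y]
  have hG_ge : TT r * (c / (c * en + 2)) ≤ bayesGuessProb q' := by
    rw [hGuess, TT, Finset.sum_mul]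
    refine Finset.sum_le_sum fun z _ => ?_
    obtain ⟨ys, hys⟩ := Finite.exists_max (fun y => margYZ r y z / ∑ z', margYZ r y z')
    have hsup_eq : (⨆ y, margYZ r y z / ∑ z', margYZ r y z')
        = margYZ r ys z / ∑ z', margYZ r ys z' :=
      le_antisymm (ciSup_le hys)
        (le_ciSup (f := fun y => margYZ r y z / ∑ z', margYZ r y z')
          (Finite.bddAbove_range _) ys)
    rw [hsup_eq]
    refine le_trans ?_
      (le_ciSup (f := fun y => margYZ r y z / (N y : ℝ)) (Finite.bddAbove_range _) ys)
    rcases eq_or_lt_of_le (hp0 ys z) with h0 | h0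
    · rw [← h0]; simp
    · rw [div_mul_div_comm, div_le_div_iff₀ (mul_pos (hPy ys) (by positivity)) (hNpos ys)]
      have key : c * (N ys : ℝ) ≤ (∑ z', margYZ r ys z') * (c * en + 2) := by
        nlinarith [mul_le_mul_of_nonneg_left (hNub ys) hc0.le, hcmin ys, hc0.le, hen0.le,
          hPy ys]
      nlinarith [mul_le_mul_of_nonneg_left key h0.le]
  have hT1 : (1:ℝ) ≤ TT r := T_ge_one (margYZ r) hp0 hPy hsumY
  have hu2 : (0:ℝ) < c / (c * en + 2) := by positivity
  have hupos : (0:ℝ) < c * en / (c * en + 2) := by positivity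
  have hTpos : (0:ℝ) < TT r := lt_of_lt_of_le one_pos hT1
  have hratio : TT r * (c * en / (c * en + 2)) ≤ bayesGuessProb q' / baselineProb q' := by
    rw [le_div_iff₀ hB_pos]
    calc TT r * (c * en / (c * en + 2)) * baselineProb q'
        ≤ TT r * (c * en / (c * en + 2)) * (1 / en) := by
          refine mul_le_mul_of_nonneg_left hB_le (mul_nonneg hTpos.le hupos.le)
      _ = TT r * (c / (c * en + 2)) := by
          field_simp
      _ ≤ bayesGuessProb q' := hG_ge
  have happlied := h S t hpmf4 hmarg hmark hneq
  rw [hq'eq] at happlied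
  refine le_trans ?_ happlied
  rw [infGain]
  exact Real.logb_le_logb_of_le (by norm_num) (mul_pos hTpos hupos) hratio


lemma mi_le_logT {Y Z : Type} [Fintype Y] [Fintype Z] [Nonempty Y]
    (p : Y → Z → ℝ) (hp : ∀ y z, 0 ≤ p y z)
    (hPy : ∀ y, 0 < ∑ z', p y z') (hsumY : ∑ y, ∑ z, p y z = 1) :
    ∑ y, ∑ z, p y z * Real.log (p y z / ((∑ z', p y z') * (∑ y', p y' z)))
      ≤ Real.log (∑ z, ⨆ y, p y z / ∑ z', p y z') := by
  set m : Z → ℝ := fun z => ⨆ y, p y z / ∑ z', p y z' with hm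
  set T : ℝ := ∑ z, m z with hT
  have hm0 : ∀ z, 0 ≤ m z := by
    intro z
    have y0 : Y := Classical.arbitrary Y
    exact le_trans (div_nonneg (hp y0 z) (hPy y0).le)
      (le_ciSup (f := fun y' => p y' z / ∑ z', p y' z') (Finite.bddAbove_range _) y0)
  have hPzm : ∀ z, (∑ y', p y' z) ≤ m z := fun z => marg_le_m p hp hPy hsumY z
  have hPz0 : ∀ z, 0 ≤ ∑ y', p y' z := fun z => Finset.sum_nonneg fun y _ => hp y z
  have hPzsum : ∑ z, ∑ y', p y' z = 1 := by rw [Finset.sum_comm]; exact hsumY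
  have hT1 : (1 : ℝ) ≤ T := T_ge_one p hp hPy hsumY
  have hT0 : (0 : ℝ) < T := lt_of_lt_of_le one_pos hT1
  -- step 1 : termwise bound
  have step1 : ∀ y z, p y z * Real.log (p y z / ((∑ z', p y z') * (∑ y', p y' z)))
      ≤ p y z * (Real.log (m z) - Real.log (∑ y', p y' z)) := by
    intro y z
    rcases eq_or_lt_of_le (hp y z) with h0 | h0
    · rw [← h0]; simp
    · have hPzpos : 0 < ∑ y', p y' z :=
        lt_of_lt_of_le h0 (Finset.single_le_sum (fun y _ => hp y z) (Finset.mem_univ y))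
      have hdivpos : 0 < p y z / (∑ z', p y z') := div_pos h0 (hPy y)
      have hle : p y z / (∑ z', p y z') ≤ m z :=
        le_ciSup (f := fun y' => p y' z / ∑ z', p y' z') (Finite.bddAbove_range _) y
      have key : p y z / ((∑ z', p y z') * (∑ y', p y' z))
          = (p y z / (∑ z', p y z')) / (∑ y', p y' z) := by rw [div_div]
      rw [key, Real.log_div hdivpos.ne' hPzpos.ne']
      have hlog : Real.log (p y z / (∑ z', p y z')) ≤ Real.log (m z) :=
        Real.log_le_log hdivpos hle
      exact mul_le_mul_of_nonneg_left (sub_le_sub_right hlog _) (hp y z)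
  -- step 3 : per-z bound
  have step3 : ∀ z, (∑ y', p y' z) * (Real.log (m z) - Real.log (∑ y', p y' z))
      ≤ m z / T - (∑ y', p y' z) + (∑ y', p y' z) * Real.log T := by
    intro z
    rcases eq_or_lt_of_le (hPz0 z) with h0 | h0
    · rw [← h0]; simpa using div_nonneg (hm0 z) hT0.le
    · have hmz : 0 < m z := lt_of_lt_of_le h0 (hPzm z)
      have hu : 0 < m z / ((∑ y', p y' z) * T) := by positivity
      have hlog := Real.log_le_sub_one_of_pos hu
      have hexp : Real.log (m z / ((∑ y', p y' z) * T))
          = Real.log (m z) - Real.log (∑ y', p y' z) - Real.log T := by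
        rw [Real.log_div hmz.ne' (by positivity), Real.log_mul h0.ne' hT0.ne']; ring
      rw [hexp] at hlog
      have h2 := mul_le_mul_of_nonneg_left hlog h0.le
      have h3 : (∑ y', p y' z) * (m z / ((∑ y', p y' z) * T) - 1)
          = m z / T - (∑ y', p y' z) := by
        field_simp
      nlinarith [h2, h3]
  calc ∑ y, ∑ z, p y z * Real.log (p y z / ((∑ z', p y z') * (∑ y', p y' z)))
      ≤ ∑ y, ∑ z, p y z * (Real.log (m z) - Real.log (∑ y', p y' z)) :=
        Finset.sum_le_sum fun y _ => Finset.sum_le_sum fun z _ => step1 y z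
    _ = ∑ z, (∑ y', p y' z) * (Real.log (m z) - Real.log (∑ y', p y' z)) := by
        rw [Finset.sum_comm]
        exact Finset.sum_congr rfl fun z _ => by rw [Finset.sum_mul]
    _ ≤ ∑ z, (m z / T - (∑ y', p y' z) + (∑ y', p y' z) * Real.log T) :=
        Finset.sum_le_sum fun z _ => step3 z
    _ = T / T - 1 + Real.log T := by
        rw [Finset.sum_add_distrib, Finset.sum_sub_distrib, ← Finset.sum_div,
          ← Finset.sum_mul, hPzsum, one_mul, ← hT]
    _ = Real.log T := by rw [div_self hT0.ne']; ring


/-- unconditional LPP–utility trade-off: for a Markov chain Y − X − Z with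
|𝕏| > 1, |𝕐| > 1, full-support P_X and strictly positive posterior P_{Y|X}, if every
random variable S with S − X − Z and S ≠ Y (as random variables) has inference gain
I_∞(S;Z) ≤ γ, then I(Y;Z) ≤ γ. -/
theorem unconditional_lpp_utility_tradeoff
    {X Y Z : Type} [Fintype X] [Fintype Y] [Fintype Z]
    [Nonempty X] [Nonempty Y] [Nonempty Z] [DecidableEq Y]
    (r : X → Y → Z → ℝ) (hr : IsJointPMF3 r) (hmc : MarkovYXZ r)
    (hcardX : 1 < Fintype.card X) (hcardY : 1 < Fintype.card Y)
    (hX : ∀ x, 0 < ∑ y, ∑ z, r x y z)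
    (hpos : ∀ x y, 0 < (∑ z, r x y z) / (∑ y', ∑ z', r x y' z'))
    (γ : ℝ)
    (h : ∀ (S : Type) [Fintype S] [Nonempty S] (t : S → X → Y → Z → ℝ),
        IsJointPMF4 t → (∀ x y z, ∑ s, t s x y z = r x y z) →
        MarkovSXZ (fun s x z => ∑ y, t s x y z) →
        ¬ EqAsRandomVars t →
        infGain (fun s z => ∑ x, ∑ y, t s x y z) ≤ γ) :
    mutInfo (fun y z => ∑ x, r x y z) ≤ γ := by
  classical
  have hp0 : ∀ y z, 0 ≤ margYZ r y z := fun y z => Finset.sum_nonneg fun x _ => hr.1 x y z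
  have hXZpos : ∀ x y, 0 < ∑ z, r x y z := by
    intro x y
    have h1 := mul_pos (hpos x y) (hX x)
    rwa [div_mul_cancel₀ _ (ne_of_gt (hX x))] at h1
  have hPy : ∀ y, 0 < ∑ z', margYZ r y z' := by
    intro y
    have hcomm : ∑ z', margYZ r y z' = ∑ x, ∑ z, r x y z := Finset.sum_comm
    rw [hcomm]
    exact Finset.sum_pos (fun x _ => hXZpos x y) Finset.univ_nonempty
  have hsumY : ∑ y, ∑ z, margYZ r y z = 1 := by
    rw [← hr.2]
    calc ∑ y, ∑ z, ∑ x, r x y z = ∑ y, ∑ x, ∑ z, r x y z :=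
          Finset.sum_congr rfl fun y _ => Finset.sum_comm
      _ = ∑ x, ∑ y, ∑ z, r x y z := Finset.sum_comm
  obtain ⟨yc, hyc⟩ := Finite.exists_min (fun y => ∑ z', margYZ r y z')
  set c : ℝ := ∑ z', margYZ r yc z' with hcdef
  have hc0 : 0 < c := hPy yc
  have hTpos : (0:ℝ) < TT r := lt_of_lt_of_le one_pos (T_ge_one (margYZ r) hp0 hPy hsumY)
  -- γ dominates every finite-n bound
  have hbound : ∀ n : ℕ,
      Real.logb 2 (TT r * ((c * ((n : ℝ) + 1)) / (c * ((n : ℝ) + 1) + 2))) ≤ γ :=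
    fun n => step2 r hr hmc hcardY hPy γ h c hc0 hyc n
  -- the bounds tend to logb 2 (TT r)
  have h1 : Filter.Tendsto (fun n : ℕ => c * ((n : ℝ) + 1)) Filter.atTop Filter.atTop := by
    apply Filter.Tendsto.const_mul_atTop hc0
    exact Filter.tendsto_atTop_add_const_right _ 1 tendsto_natCast_atTop_atTop
  have h2 : Filter.Tendsto (fun n : ℕ => c * ((n : ℝ) + 1) + 2) Filter.atTop Filter.atTop :=
    Filter.tendsto_atTop_add_const_right _ 2 h1
  have h3 : Filter.Tendsto
      (fun n : ℕ => (c * ((n : ℝ) + 1)) / (c * ((n : ℝ) + 1) + 2)) Filter.atTop (nhds 1) := by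
    have heq : ∀ n : ℕ, (c * ((n : ℝ) + 1)) / (c * ((n : ℝ) + 1) + 2)
        = 1 - 2 / (c * ((n : ℝ) + 1) + 2) := by
      intro n
      have hd : c * ((n : ℝ) + 1) + 2 ≠ 0 := by positivity
      field_simp
      ring
    simp only [heq]
    have hz : Filter.Tendsto (fun n : ℕ => 2 / (c * ((n : ℝ) + 1) + 2))
        Filter.atTop (nhds 0) := Filter.Tendsto.div_atTop tendsto_const_nhds h2
    simpa using tendsto_const_nhds.sub hz
  have h4 : Filter.Tendsto
      (fun n : ℕ => TT r * ((c * ((n : ℝ) + 1)) / (c * ((n : ℝ) + 1) + 2)))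
      Filter.atTop (nhds (TT r)) := by
    simpa using tendsto_const_nhds.mul h3
  have h5 : Filter.Tendsto
      (fun n : ℕ => Real.logb 2 (TT r * ((c * ((n : ℝ) + 1)) / (c * ((n : ℝ) + 1) + 2))))
      Filter.atTop (nhds (Real.logb 2 (TT r))) := by
    have hlogt := ((Real.continuousAt_log (ne_of_gt hTpos)).tendsto.comp h4).div_const
      (Real.log 2)
    simpa [Real.logb, Function.comp] using hlogt
  have hγ : Real.logb 2 (TT r) ≤ γ := le_of_tendsto' h5 hbound
  -- mutual information is at most logb 2 (TT r)
  have hlog2 : (0:ℝ) < Real.log 2 := Real.log_pos (by norm_num)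
  have hmi := mi_le_logT (margYZ r) hp0 hPy hsumY
  calc mutInfo (fun y z => ∑ x, r x y z)
      = (∑ y, ∑ z, margYZ r y z *
          Real.log (margYZ r y z / ((∑ z', margYZ r y z') * (∑ y', margYZ r y' z))))
          / Real.log 2 := by
        rw [mutInfo]
        simp only [Real.logb, margYZ, mul_div_assoc', ← Finset.sum_div]
    _ ≤ Real.log (TT r) / Real.log 2 := by
        exact div_le_div_of_nonneg_right hmi hlog2.le
    _ = Real.logb 2 (TT r) := rfl
    _ ≤ γ := hγ
end
end

section
/- Under the hypotheses of the unconditional LPP trade-off, it suffices that the task label is not deterministic given one label value: if there exist x, x', y with P_{X|Y}(x|y) > 0 and P_{X|Y}(x'|y) > 0 and x ≠ x', then the maximally revealing attribute S* differs from Y as a random variable (there is no bijection between them making them equal), so the supremum of I_∞(S;Z) over S ≠ Y with S − X − Z still equals L(X → Z). -/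
open scoped BigOperators
noncomputable section

/-- Closed form of maximal leakage: L(X → Z) = log₂(∑_z max_x P_{Z|X}(z|x)). -/
def maxLeak {X Z : Type} [Fintype X] [Fintype Z] [Nonempty X] (p : X → Z → ℝ) : ℝ :=
  Real.logb 2 (∑ z, Finset.univ.sup' Finset.univ_nonempty fun x => p x z / ∑ z', p x z')

/- ### Auxiliary lemmas -/

lemma bayes_eq_sum_sup' {S Z : Type} [Fintype S] [Fintype Z] [Nonempty S] (q : S → Z → ℝ) :
    bayesGuessProb q = ∑ z, Finset.univ.sup' Finset.univ_nonempty (fun s => q s z) := by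
  classical
  apply le_antisymm
  · exact ciSup_le fun g => Finset.sum_le_sum fun z _ =>
      Finset.le_sup' (fun s => q s z) (Finset.mem_univ (g z))
  · choose g hg hg2 using fun z => Finset.exists_mem_eq_sup' (Finset.univ_nonempty (α := S))
      (fun s => q s z)
    calc ∑ z, Finset.univ.sup' Finset.univ_nonempty (fun s => q s z)
        = ∑ z, q (g z) z := Finset.sum_congr rfl fun z _ => hg2 z
      _ ≤ bayesGuessProb q :=
          le_ciSup (Set.Finite.bddAbove (Set.finite_range fun g : Z → S => ∑ z, q (g z) z)) g

lemma baseline_le_bayes {S Z : Type} [Fintype S] [Fintype Z] [Nonempty S] (q : S → Z → ℝ) :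
    baselineProb q ≤ bayesGuessProb q := by
  refine ciSup_le fun s => ?_
  exact le_ciSup (Set.Finite.bddAbove (Set.finite_range fun g : Z → S => ∑ z, q (g z) z))
    (fun _ => s)

lemma upper_aux {X Z S : Type} [Fintype X] [Fintype Z] [Fintype S]
    [Nonempty X] [Nonempty S] (p : X → Z → ℝ) (q2 : S → X → Z → ℝ)
    (hp : ∀ x z, 0 ≤ p x z) (hq2 : ∀ s x z, 0 ≤ q2 s x z)
    (hsum : ∑ x, ∑ z, p x z = 1)
    (hPx : ∀ x, 0 < ∑ z, p x z)
    (hmarg : ∀ x z, ∑ s, q2 s x z = p x z)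
    (hmc : MarkovSXZ q2) :
    infGain (fun s z => ∑ x, q2 s x z) ≤ maxLeak p := by
  classical
  set P : X → ℝ := fun x => ∑ z, p x z with hP
  set a : S → X → ℝ := fun s x => ∑ z, q2 s x z with ha
  set M : Z → ℝ := fun z => Finset.univ.sup' Finset.univ_nonempty (fun x => p x z / P x) with hM
  set q : S → Z → ℝ := fun s z => ∑ x, q2 s x z with hq
  set A : S → ℝ := fun s => ∑ x, a s x with hA
  have key : ∀ s x z, q2 s x z * P x = a s x * p x z := by
    intro s x z
    have h1 : ∑ sq, ∑ zq, q2 sq x zq = P x := by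
      rw [Finset.sum_comm]
      exact Finset.sum_congr rfl fun z _ => hmarg x z
    have h2 : ∑ sq, q2 sq x z = p x z := hmarg x z
    have := hmc s x z
    rw [h1, h2] at this
    exact this
  have hq2eq : ∀ s x z, q2 s x z = a s x * (p x z / P x) := by
    intro s x z
    have hPx' : (0:ℝ) < P x := hPx x
    rw [mul_div_assoc', eq_div_iff hPx'.ne', mul_comm (a s x) (p x z)]
    linarith [key s x z]
  have ha0 : ∀ s x, 0 ≤ a s x := fun s x => Finset.sum_nonneg fun z _ => hq2 s x z
  have hMle : ∀ x z, p x z / P x ≤ M z := fun x z =>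
    Finset.le_sup' (fun x => p x z / P x) (Finset.mem_univ x)
  have hM0 : ∀ z, 0 ≤ M z := by
    intro z
    obtain ⟨x0⟩ := ‹Nonempty X›
    exact le_trans (div_nonneg (hp x0 z) (hPx x0).le) (hMle x0 z)
  have hqz : ∀ s, ∑ z, q s z = A s := by
    intro s
    rw [hq, hA, Finset.sum_comm]
  have hqM : ∀ s z, q s z ≤ M z * A s := by
    intro s z
    calc q s z = ∑ x, a s x * (p x z / P x) :=
          Finset.sum_congr rfl fun x _ => hq2eq s x z
      _ ≤ ∑ x, a s x * M z :=
          Finset.sum_le_sum fun x _ => mul_le_mul_of_nonneg_left (hMle x z) (ha0 s x)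
      _ = M z * A s := by rw [← Finset.sum_mul, hA, mul_comm]
  set B := baselineProb q with hB
  have hAB : ∀ s, A s ≤ B := by
    intro s
    rw [← hqz s]
    exact le_ciSup (Set.Finite.bddAbove (Set.finite_range fun s => ∑ z, q s z)) s
  have hB0 : 0 < B := by
    have hsumA : ∑ s, A s = 1 := by
      rw [hA]
      calc ∑ s, ∑ x, a s x = ∑ x, ∑ s, ∑ z, q2 s x z := by rw [Finset.sum_comm]
        _ = ∑ x, ∑ z, ∑ s, q2 s x z := Finset.sum_congr rfl fun x _ => Finset.sum_comm
        _ = ∑ x, ∑ z, p x z :=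
            Finset.sum_congr rfl fun x _ => Finset.sum_congr rfl fun z _ => hmarg x z
        _ = 1 := hsum
    by_contra h
    push_neg at h
    have h2 : ∀ s, A s ≤ 0 := fun s => le_trans (hAB s) h
    have h3 : ∑ s, A s ≤ 0 := Finset.sum_nonpos fun s _ => h2 s
    linarith [hsumA ▸ h3]
  have hbayes : bayesGuessProb q ≤ (∑ z, M z) * B := by
    rw [bayes_eq_sum_sup', Finset.sum_mul]
    refine Finset.sum_le_sum fun z _ => ?_
    refine Finset.sup'_le _ _ fun s _ => ?_
    exact le_trans (hqM s z) (mul_le_mul_of_nonneg_left (hAB s) (hM0 z))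
  have hbayes0 : 0 < bayesGuessProb q := lt_of_lt_of_le hB0 (baseline_le_bayes q)
  have hratio : bayesGuessProb q / B ≤ ∑ z, M z := by
    rw [div_le_iff₀ hB0]
    exact hbayes
  have hfin : infGain q ≤ Real.logb 2 (∑ z, M z) :=
    Real.logb_le_logb_of_le one_lt_two (div_pos hbayes0 hB0) hratio
  exact le_trans hfin (le_of_eq rfl)

lemma sum_v_aux (P c : ℝ) (k m : ℕ) (hkm : k < m) :
    ∑ i : Fin m, (if (i:ℕ) < k then c else if (i:ℕ) = k then P - k * c else 0) = P := by
  rw [Fin.sum_univ_eq_sum_range (fun i => if i < k then c else if i = k then P - (k:ℝ) * c else 0) m]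
  have h1 : ∀ i ∈ Finset.range m,
      (if i < k then c else if i = k then P - k * c else 0)
      = (if i < k then c else 0) + (if i = k then P - k*c else 0) := by
    intro i _
    rcases lt_trichotomy i k with h | h | h
    · simp [h, Nat.ne_of_lt h]
    · simp [h]
    · simp [Nat.lt_asymm h, (Nat.ne_of_lt h).symm]
  rw [Finset.sum_congr rfl h1, Finset.sum_add_distrib]
  have h2 : ∑ i ∈ Finset.range m, (if i < k then c else 0) = k * c := by
    rw [← Finset.sum_subset (Finset.range_subset_range.mpr hkm.le)
      (fun i _ hi => by simp [Nat.not_lt.mp (by simpa [Finset.mem_range] using hi)])]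
    rw [Finset.sum_congr rfl (fun i hi => if_pos (Finset.mem_range.mp hi))]
    simp [mul_comm]
  have h3 : ∑ i ∈ Finset.range m, (if i = k then P - k*c else 0) = P - k*c := by
    rw [Finset.sum_ite_eq' (Finset.range m) k (fun _ => P - k*c)]
    simp [hkm]
  rw [h2, h3]; ring

/-- if the task label is not deterministic given one label value
(there are x ≠ x' with P_{X|Y}(x|y) > 0 and P_{X|Y}(x'|y) > 0), then the maximally
revealing attribute S* differs from Y as a random variable (no bijection identifies
them a.s.), so the supremum of I_∞(S;Z) over S ≠ Y with S − X − Z still equals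
L(X → Z): every such S has gain ≤ L(X → Z) and some S* ≠ Y attains it. -/
theorem max_revealing_attribute_differs_from_label
    {X Y Z : Type} [Fintype X] [Fintype Y] [Fintype Z]
    [Nonempty X] [Nonempty Y] [Nonempty Z] [DecidableEq Y]
    (r : X → Y → Z → ℝ) (hr : IsJointPMF3 r) (hmc : MarkovYXZ r)
    (hcardX : 1 < Fintype.card X) (hcardY : 1 < Fintype.card Y)
    (hX : ∀ x, 0 < ∑ y, ∑ z, r x y z)
    (hnd : ∃ (y : Y) (x x' : X), x ≠ x' ∧
        0 < (∑ z, r x y z) / (∑ x'', ∑ z, r x'' y z) ∧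
        0 < (∑ z, r x' y z) / (∑ x'', ∑ z, r x'' y z)) :
    (∀ (S : Type) [Fintype S] [Nonempty S] (t : S → X → Y → Z → ℝ),
        IsJointPMF4 t → (∀ x y z, ∑ s, t s x y z = r x y z) →
        MarkovSXZ (fun s x z => ∑ y, t s x y z) →
        ¬ EqAsRandomVars t →
        infGain (fun s z => ∑ x, ∑ y, t s x y z)
          ≤ maxLeak (fun x z => ∑ y, r x y z)) ∧
    (∃ (n : ℕ) (_ : 0 < n) (t : Fin n → X → Y → Z → ℝ),
        IsJointPMF4 t ∧ (∀ x y z, ∑ s, t s x y z = r x y z) ∧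
        MarkovSXZ (fun s x z => ∑ y, t s x y z) ∧
        ¬ EqAsRandomVars t ∧
        infGain (fun s z => ∑ x, ∑ y, t s x y z)
          = maxLeak (fun x z => ∑ y, r x y z)) := by
  classical
  have hp0 : ∀ x z, 0 ≤ ∑ y, r x y z := fun x z => Finset.sum_nonneg fun y _ => hr.1 x y z
  have hpz : ∀ x, ∑ z, ∑ y, r x y z = ∑ y, ∑ z, r x y z := fun x => Finset.sum_comm
  constructor
  · -- upper bound for every admissible S
    intro S _ _ t ht hmargt hmct _
    have h1 : ∀ x z, ∑ s, (∑ y, t s x y z) = ∑ y, r x y z := by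
      intro x z
      rw [Finset.sum_comm]
      exact Finset.sum_congr rfl fun y _ => hmargt x y z
    have h2 : ∑ x, ∑ z, ∑ y, r x y z = 1 := by
      rw [Finset.sum_congr rfl fun x (_ : x ∈ Finset.univ) => hpz x]
      exact hr.2
    have h3 : ∀ x, 0 < ∑ z, ∑ y, r x y z := fun x => by rw [hpz]; exact hX x
    exact upper_aux (fun x z => ∑ y, r x y z) (fun s x z => ∑ y, t s x y z)
      hp0 (fun s x z => Finset.sum_nonneg fun y _ => ht.1 s x y z) h2 h3 h1 hmct
  · -- the achieving construction
    set p : X → Z → ℝ := fun x z => ∑ y, r x y z with hpdef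
    set P : X → ℝ := fun x => ∑ y, ∑ z, r x y z with hPdef
    have hP0 : ∀ x, 0 < P x := hX
    have hpzP : ∀ x, ∑ z, p x z = P x := fun x => Finset.sum_comm
    have hpnn : ∀ x z, 0 ≤ p x z := hp0
    set c : ℝ := Finset.univ.inf' Finset.univ_nonempty P with hcdef
    have hc0 : 0 < c := by
      rw [hcdef, Finset.lt_inf'_iff]
      exact fun x _ => hP0 x
    have hcP : ∀ x, c ≤ P x := fun x => Finset.inf'_le P (Finset.mem_univ x)
    set k : X → ℕ := fun x => ⌊P x / c⌋₊ with hkdef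
    have hk1 : ∀ x, 1 ≤ k x := by
      intro x
      apply Nat.le_floor
      rw [Nat.cast_one, le_div_iff₀ hc0, one_mul]
      exact hcP x
    have hkc : ∀ x, (k x : ℝ) * c ≤ P x := by
      intro x
      rw [← le_div_iff₀ hc0]
      exact Nat.floor_le (div_nonneg (hP0 x).le hc0.le)
    have hremc : ∀ x, P x - (k x : ℝ) * c ≤ c := by
      intro x
      have h := Nat.lt_floor_add_one (P x / c)
      rw [div_lt_iff₀ hc0] at h
      have : P x < ((k x : ℝ) + 1) * c := h
      nlinarith
    set m0 : ℕ := 1 + Finset.univ.sup k with hm0def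
    set m : ℕ := if Fintype.card X * m0 = Fintype.card Y then m0 + 1 else m0 with hmdef
    have hm0m : m0 ≤ m := by rw [hmdef]; split <;> omega
    have hkm : ∀ x, k x < m := by
      intro x
      have h1 : k x ≤ Finset.univ.sup k := Finset.le_sup (Finset.mem_univ x)
      omega
    have hmpos : 0 < m := by omega
    have hcard : Fintype.card X * m ≠ Fintype.card Y := by
      rw [hmdef]
      split_ifs with h
      · have hx : 0 < Fintype.card X := Fintype.card_pos
        rw [Nat.mul_succ, h]
        omega
      · exact h
    set n : ℕ := Fintype.card X * m with hndef
    have hn : 0 < n := Nat.mul_pos Fintype.card_pos hmpos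
    have hcn : Fintype.card (X × Fin m) = n := by simp [hndef]
    set E : Fin n ≃ X × Fin m := (finCongr hcn.symm).trans (Fintype.equivFin (X × Fin m)).symm
      with hEdef
    haveI : Nonempty (Fin n) := Fin.pos_iff_nonempty.mp hn
    set v : X → ℕ → ℝ :=
      fun x i => if i < k x then c else if i = k x then P x - (k x : ℝ) * c else 0 with hvdef
    have hv0 : ∀ x i, 0 ≤ v x i := by
      intro x i
      rw [hvdef]
      dsimp only
      split_ifs
      · exact hc0.le
      · nlinarith [hkc x]
      · exact le_refl 0
    have hvc : ∀ x i, v x i ≤ c := by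
      intro x i
      rw [hvdef]
      dsimp only
      split_ifs
      · exact le_refl c
      · exact hremc x
      · exact hc0.le
    have hvz : ∀ x, v x 0 = c := fun x => if_pos (hk1 x)
    have hW : ∀ x, ∑ i : Fin m, v x (i:ℕ) = P x := fun x => sum_v_aux (P x) c (k x) m (hkm x)
    set t : Fin n → X → Y → Z → ℝ :=
      fun s x y z => if (E s).1 = x then v x ((E s).2:ℕ) / P x * r x y z else 0 with htdef
    have ht0 : ∀ s x y z, 0 ≤ t s x y z := by
      intro s x y z
      rw [htdef]
      dsimp only
      split_ifs
      · exact mul_nonneg (div_nonneg (hv0 _ _) (hP0 _).le) (hr.1 x y z)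
      · exact le_refl 0
    have hmargT : ∀ x y z, ∑ s, t s x y z = r x y z := by
      intro x y z
      calc ∑ s, t s x y z
          = ∑ u : X × Fin m, (if u.1 = x then v x (u.2:ℕ) / P x * r x y z else 0) :=
            Equiv.sum_comp E (fun u => if u.1 = x then v x (u.2:ℕ) / P x * r x y z else 0)
        _ = ∑ x' : X, ∑ i : Fin m, (if x' = x then v x (i:ℕ) / P x * r x y z else 0) :=
            Fintype.sum_prod_type _
        _ = ∑ x' : X, (if x' = x then ∑ i : Fin m, v x (i:ℕ) / P x * r x y z else 0) := by
            refine Finset.sum_congr rfl fun x' _ => ?_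
            by_cases h : x' = x <;> simp [h]
        _ = ∑ i : Fin m, v x (i:ℕ) / P x * r x y z := by
            rw [Finset.sum_ite_eq' Finset.univ x
              (fun _ => ∑ i : Fin m, v x (i:ℕ) / P x * r x y z)]
            simp
        _ = r x y z := by
            rw [← Finset.sum_mul, ← Finset.sum_div, hW x, div_self (hP0 x).ne', one_mul]
    have hq2 : ∀ s x z,
        ∑ y, t s x y z = if (E s).1 = x then v x ((E s).2:ℕ) / P x * p x z else 0 := by
      intro s x z
      rw [htdef]
      dsimp only
      by_cases h : (E s).1 = x
      · simp only [if_pos h, hpdef, ← Finset.mul_sum]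
      · simp only [if_neg h, Finset.sum_const_zero]
    have hq2margS : ∀ x z, ∑ s, ∑ y, t s x y z = p x z := by
      intro x z
      rw [Finset.sum_comm]
      exact Finset.sum_congr rfl fun y _ => hmargT x y z
    have hq2z : ∀ s x, ∑ z, (∑ y, t s x y z) = if (E s).1 = x then v x ((E s).2:ℕ) else 0 := by
      intro s x
      rw [Finset.sum_congr rfl fun z (_ : z ∈ Finset.univ) => hq2 s x z]
      by_cases h : (E s).1 = x
      · simp only [if_pos h]
        rw [← Finset.mul_sum, hpzP x, div_mul_cancel₀ _ (hP0 x).ne']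
      · simp [h]
    refine ⟨n, hn, t, ⟨ht0, ?_⟩, hmargT, ?_, ?_, ?_⟩
    · -- total mass
      calc ∑ s, ∑ x, ∑ y, ∑ z, t s x y z
          = ∑ x, ∑ s, ∑ y, ∑ z, t s x y z := Finset.sum_comm
        _ = ∑ x, ∑ y, ∑ s, ∑ z, t s x y z :=
            Finset.sum_congr rfl fun x _ => Finset.sum_comm
        _ = ∑ x, ∑ y, ∑ z, ∑ s, t s x y z :=
            Finset.sum_congr rfl fun x _ => Finset.sum_congr rfl fun y _ => Finset.sum_comm
        _ = ∑ x, ∑ y, ∑ z, r x y z :=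
            Finset.sum_congr rfl fun x _ => Finset.sum_congr rfl fun y _ =>
              Finset.sum_congr rfl fun z _ => hmargT x y z
        _ = 1 := hr.2
    · -- Markov
      intro s x z
      dsimp only
      have e1 : ∑ sq, ∑ zq, ∑ y, t sq x y zq = P x := by
        rw [Finset.sum_comm]
        rw [Finset.sum_congr rfl fun zq (_ : zq ∈ Finset.univ) => hq2margS x zq]
        exact hpzP x
      have e2 : ∑ sq, ∑ y, t sq x y z = p x z := hq2margS x z
      rw [e1, e2, hq2 s x z, hq2z s x]
      by_cases h : (E s).1 = x
      · simp only [if_pos h]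
        field_simp
        rw [mul_assoc, mul_div_assoc, mul_div_cancel_left₀ _ (hP0 x).ne']
      · simp [h]
    · -- not equal to Y as random variables
      rintro ⟨φ, -⟩
      have hcg := Fintype.card_congr φ
      rw [Fintype.card_fin] at hcg
      rw [hndef] at hcg
      exact hcard hcg
    · -- infGain = maxLeak
      have hqx : ∀ s z, ∑ x, ∑ y, t s x y z
          = v (E s).1 ((E s).2:ℕ) / P (E s).1 * p (E s).1 z := by
        intro s z
        rw [Finset.sum_congr rfl fun x (_ : x ∈ Finset.univ) => hq2 s x z]
        rw [Finset.sum_ite_eq Finset.univ (E s).1 (fun x => v x ((E s).2:ℕ) / P x * p x z)]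
        simp
      have hqzs : ∀ s : Fin n, ∑ z, (∑ x, ∑ y, t s x y z) = v (E s).1 ((E s).2:ℕ) := by
        intro s
        rw [Finset.sum_congr rfl fun z (_ : z ∈ Finset.univ) => hqx s z,
          ← Finset.mul_sum, hpzP, div_mul_cancel₀ _ (hP0 _).ne']
      have hbase : baselineProb (fun s z => ∑ x, ∑ y, t s x y z) = c := by
        apply le_antisymm
        · exact ciSup_le fun s => by rw [hqzs s]; exact hvc _ _
        · obtain ⟨x0⟩ := ‹Nonempty X›
          have h1 : ∑ z, (∑ x, ∑ y, t (E.symm (x0, ⟨0, hmpos⟩)) x y z) = c := by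
            rw [hqzs]
            simp only [Equiv.apply_symm_apply]
            exact hvz x0
          calc c = ∑ z, (∑ x, ∑ y, t (E.symm (x0, ⟨0, hmpos⟩)) x y z) := h1.symm
            _ ≤ baselineProb (fun s z => ∑ x, ∑ y, t s x y z) :=
              le_ciSup (Set.Finite.bddAbove (Set.finite_range
                (fun s : Fin n => ∑ z, (∑ x, ∑ y, t s x y z)))) _
      set M : Z → ℝ := fun z => Finset.univ.sup' Finset.univ_nonempty (fun x => p x z / P x)
        with hMdef
      have hsupq : ∀ z, Finset.univ.sup' Finset.univ_nonempty
          (fun s : Fin n => ∑ x, ∑ y, t s x y z) = c * M z := by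
        intro z
        apply le_antisymm
        · refine Finset.sup'_le _ _ fun s _ => ?_
          rw [hqx s z, div_mul_eq_mul_div, mul_div_assoc]
          exact mul_le_mul (hvc _ _)
            (Finset.le_sup' (fun x => p x z / P x) (Finset.mem_univ _))
            (div_nonneg (hpnn _ _) (hP0 _).le) hc0.le
        · obtain ⟨xs, -, hxs⟩ := Finset.exists_mem_eq_sup' (Finset.univ_nonempty (α := X))
            (fun x => p x z / P x)
          have h2 : ∑ x, ∑ y, t (E.symm (xs, ⟨0, hmpos⟩)) x y z = c * M z := by
            rw [hqx]
            simp only [Equiv.apply_symm_apply]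
            rw [hvz xs, div_mul_eq_mul_div, mul_div_assoc]
            simp only [hMdef]
            rw [hxs]
          rw [← h2]
          exact Finset.le_sup' (fun s : Fin n => ∑ x, ∑ y, t s x y z)
            (Finset.mem_univ (E.symm (xs, ⟨0, hmpos⟩)))
      have hbayes : bayesGuessProb (fun s z => ∑ x, ∑ y, t s x y z) = c * ∑ z, M z := by
        rw [bayes_eq_sum_sup']
        rw [Finset.sum_congr rfl fun z (_ : z ∈ Finset.univ) => hsupq z, ← Finset.mul_sum]
      have hML : maxLeak p = Real.logb 2 (∑ z, M z) := by
        unfold maxLeak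
        congr 1
        refine Finset.sum_congr rfl fun z _ => ?_
        refine Finset.sup'_congr _ rfl fun x _ => ?_
        rw [hpzP x]
      rw [infGain, hbayes, hbase, hML, mul_comm c, mul_div_assoc, div_self hc0.ne', mul_one]
end
end
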